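/- Let α ∈ (0,1), p ∈ [1, n/α), q ∈ [1,∞), let μ be a nonnegative outer measure on ℝⁿ, and let φ : ℝⁿ → ℝⁿ be a Borel map. Then the following are equivalent: (1) there is a constant c > 0 such that ‖f∘φ‖_{L^{q,∞}_μ} ≤ c ‖f‖_{Λ̇_α^{p,∞}} for every f ∈ Λ_α^{p,∞} ∩ C(ℝⁿ); (2) there is a constant c > 0 such that μ(φ^{−1}(E)) ≤ c ( C_{α,p,∞}(E) )^{q/p} for every Borel set E ⊆ ℝⁿ. -/

import Mathlib

/-!
(2) ⇒ (1): for continuous `f` and `t > 0` the superlevel set `{|f| > t}` is open, hence Borel, and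
`t⁻¹ |f|` is admissible for it with Besov seminorm at most `t⁻¹ ‖f‖`, so its capacity is at
most `(t⁻¹ ‖f‖)^p`; the capacity bound applied to this set is exactly the weak-type estimate at
level `t`.
(1) ⇒ (2): a function admissible for `E` exceeds `1/2` on `E`, so the weak-type estimate at level
`1/2` bounds `μ (φ⁻¹ E)` by `‖f‖^q` up to a constant; take the infimum over admissible `f`.
-/

open MeasureTheory ENNReal

noncomputable def besovSeminorm (n : ℕ) (α p : ℝ)
    (f : EuclideanSpace ℝ (Fin n) → ℝ) : ℝ≥0∞ :=
  ⨆ (h : EuclideanSpace ℝ (Fin n)) (_ : h ≠ 0),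
    ENNReal.ofReal (‖h‖ ^ (-α)) *
      eLpNorm (fun x => f (x + h) - f x) (ENNReal.ofReal p) volume

def besovAdmissible (n : ℕ) (α p : ℝ) (E : Set (EuclideanSpace ℝ (Fin n)))
    (f : EuclideanSpace ℝ (Fin n) → ℝ) : Prop :=
  MemLp f (ENNReal.ofReal p) volume ∧ besovSeminorm n α p f < ⊤ ∧ Continuous f ∧
    ∃ N : Set (EuclideanSpace ℝ (Fin n)), IsOpen N ∧ E ⊆ N ∧ ∀ x ∈ N, 1 ≤ f x

noncomputable def besovCapacity (n : ℕ) (α p : ℝ)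
    (E : Set (EuclideanSpace ℝ (Fin n))) : ℝ≥0∞ :=
  ⨅ (f : EuclideanSpace ℝ (Fin n) → ℝ) (_ : besovAdmissible n α p E f),
    besovSeminorm n α p f ^ p

noncomputable def besovPerimeter (n : ℕ) (α p : ℝ)
    (E : Set (EuclideanSpace ℝ (Fin n))) : ℝ≥0∞ :=
  besovSeminorm n α p (E.indicator fun _ => (1 : ℝ))

open scoped NNReal

noncomputable def weakLorentzNorm {X : Type*} (μ : OuterMeasure X) (q : ℝ) (g : X → ℝ) : ℝ≥0∞ :=
  ⨆ (t : ℝ) (_ : 0 < t), (ENNReal.ofReal t ^ q * μ {x | t < |g x|}) ^ (1 / q)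

lemma weakLorentzNorm_le_iff {X : Type*} {μ : OuterMeasure X} {q : ℝ} (hq : 0 < q) {g : X → ℝ}
    {A : ℝ≥0∞} :
    weakLorentzNorm μ q g ≤ A ↔
      ∀ t : ℝ, 0 < t → ENNReal.ofReal t ^ q * μ {x | t < |g x|} ≤ A ^ q := by
  simp only [weakLorentzNorm, iSup₂_le_iff, one_div, ENNReal.rpow_inv_le_iff hq]

section Besov

variable {n : ℕ} {α p : ℝ}

lemma besovSeminorm_comp_le {F : ℝ → ℝ} {K : ℝ≥0} (hF : LipschitzWith K F)
    (f : EuclideanSpace ℝ (Fin n) → ℝ) :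
    besovSeminorm n α p (F ∘ f) ≤ K * besovSeminorm n α p f := by
  simp only [besovSeminorm, ENNReal.mul_iSup]
  refine iSup₂_mono fun h _ => ?_
  have hdiff : eLpNorm (fun x => F (f (x + h)) - F (f x)) (ENNReal.ofReal p) volume ≤
      K * eLpNorm (fun x => f (x + h) - f x) (ENNReal.ofReal p) volume :=
    eLpNorm_le_nnreal_smul_eLpNorm_of_ae_le_mul'
      (ae_of_all _ fun x => by simpa only [edist_eq_enorm_sub] using hF.edist_le_mul _ _) _
  calc ENNReal.ofReal (‖h‖ ^ (-α)) *
        eLpNorm (fun x => F (f (x + h)) - F (f x)) (ENNReal.ofReal p) volume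
      ≤ ENNReal.ofReal (‖h‖ ^ (-α)) *
          (K * eLpNorm (fun x => f (x + h) - f x) (ENNReal.ofReal p) volume) := by gcongr
    _ = _ := mul_left_comm _ _ _

lemma lipschitzWith_const_mul_abs {t : ℝ} (ht : 0 ≤ t) :
    LipschitzWith (Real.toNNReal t) fun y : ℝ => t * |y| :=
  LipschitzWith.of_dist_le_mul fun x y => by
    rw [Real.dist_eq, Real.dist_eq, ← mul_sub, abs_mul, abs_of_nonneg ht, Real.coe_toNNReal _ ht]
    exact mul_le_mul_of_nonneg_left (abs_abs_sub_abs_le_abs_sub x y) ht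

lemma besovCapacity_superlevelSet_le (hp : 0 ≤ p) {f : EuclideanSpace ℝ (Fin n) → ℝ}
    (hmem : MemLp f (ENNReal.ofReal p) volume) (hfin : besovSeminorm n α p f < ⊤)
    (hcont : Continuous f) {t : ℝ} (ht : 0 < t) :
    besovCapacity n α p {y | t < |f y|} ≤ (ENNReal.ofReal t⁻¹ * besovSeminorm n α p f) ^ p := by
  have hseminorm : besovSeminorm n α p (fun y => t⁻¹ * |f y|) ≤
      ENNReal.ofReal t⁻¹ * besovSeminorm n α p f :=
    besovSeminorm_comp_le (lipschitzWith_const_mul_abs (inv_nonneg.2 ht.le)) f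
  have hadm : besovAdmissible n α p {y | t < |f y|} fun y => t⁻¹ * |f y| := by
    refine ⟨hmem.abs.const_mul t⁻¹, hseminorm.trans_lt (ENNReal.mul_lt_top ofReal_lt_top hfin),
      by fun_prop, _, isOpen_lt continuous_const (by fun_prop), subset_rfl, fun y hy => ?_⟩
    rw [le_inv_mul_iff₀ ht, mul_one]
    exact hy.le
  exact (iInf₂_le _ hadm).trans (ENNReal.rpow_le_rpow hseminorm hp)

lemma le_mul_besovCapacity_rpow {E : Set (EuclideanSpace ℝ (Fin n))} {a K : ℝ≥0∞} (hK₀ : K ≠ 0)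
    (hK : K ≠ ⊤) {r : ℝ} (hr : 0 < r)
    (h : ∀ f, besovAdmissible n α p E f → a ≤ K * (besovSeminorm n α p f ^ p) ^ r) :
    a ≤ K * besovCapacity n α p E ^ r := by
  have hrpow : besovCapacity n α p E ^ r =
      ⨅ (f) (_ : besovAdmissible n α p E f), (besovSeminorm n α p f ^ p) ^ r := by
    simp only [besovCapacity, ← ENNReal.orderIsoRpow_apply r hr, OrderIso.map_iInf]
  simpa only [hrpow, ENNReal.mul_iInf_of_ne hK₀ hK] using le_iInf₂ h

end Besov

section Trace

variable {n : ℕ} {α p q : ℝ} {μ : OuterMeasure (EuclideanSpace ℝ (Fin n))}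
  {φ : EuclideanSpace ℝ (Fin n) → EuclideanSpace ℝ (Fin n)}

lemma measure_preimage_le_of_weakLorentzNorm_comp_le (hp : 0 < p) (hq : 0 < q) {c : ℝ}
    (hc : 0 < c)
    (htrace : ∀ f : EuclideanSpace ℝ (Fin n) → ℝ, MemLp f (ENNReal.ofReal p) volume →
      besovSeminorm n α p f < ⊤ → Continuous f →
      weakLorentzNorm μ q (f ∘ φ) ≤ ENNReal.ofReal c * besovSeminorm n α p f)
    (E : Set (EuclideanSpace ℝ (Fin n))) :
    μ (φ ⁻¹' E) ≤ ENNReal.ofReal ((2 * c) ^ q) * besovCapacity n α p E ^ (q / p) := by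
  refine le_mul_besovCapacity_rpow (by positivity) ofReal_ne_top (div_pos hq hp) ?_
  rintro f ⟨hmem, hfin, hcont, N, -, hEN, hN⟩
  have hlevel : ENNReal.ofReal 2⁻¹ ^ q * μ {x | 2⁻¹ < |f (φ x)|} ≤
      (ENNReal.ofReal c * besovSeminorm n α p f) ^ q :=
    (weakLorentzNorm_le_iff hq).1 (htrace f hmem hfin hcont) _ (by norm_num)
  have hsub : φ ⁻¹' E ⊆ {x | 2⁻¹ < |f (φ x)|} := fun x hx =>
    lt_of_lt_of_le (by norm_num) ((hN _ (hEN hx)).trans (le_abs_self _))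
  calc μ (φ ⁻¹' E) ≤ μ {x | 2⁻¹ < |f (φ x)|} := μ.mono hsub
    _ = ENNReal.ofReal 2 ^ q * (ENNReal.ofReal 2⁻¹ ^ q * μ {x | 2⁻¹ < |f (φ x)|}) := by
      rw [← mul_assoc, ← ENNReal.mul_rpow_of_nonneg _ _ hq.le, ← ENNReal.ofReal_mul zero_le_two,
        mul_inv_cancel₀ two_ne_zero, ENNReal.ofReal_one, ENNReal.one_rpow, one_mul]
    _ ≤ ENNReal.ofReal 2 ^ q * (ENNReal.ofReal c * besovSeminorm n α p f) ^ q := by gcongr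
    _ = ENNReal.ofReal ((2 * c) ^ q) * (besovSeminorm n α p f ^ p) ^ (q / p) := by
      rw [← ENNReal.rpow_mul, mul_div_cancel₀ _ hp.ne', ← ENNReal.ofReal_rpow_of_nonneg
        (by positivity) hq.le, ENNReal.ofReal_mul zero_le_two, ENNReal.mul_rpow_of_nonneg _ _ hq.le,
        ENNReal.mul_rpow_of_nonneg _ _ hq.le, mul_assoc]

lemma weakLorentzNorm_comp_le_of_measure_preimage_le (hp : 0 < p) (hq : 0 < q) {c : ℝ}
    (hc : 0 ≤ c)
    (hcap : ∀ E : Set (EuclideanSpace ℝ (Fin n)), MeasurableSet E →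
      μ (φ ⁻¹' E) ≤ ENNReal.ofReal c * besovCapacity n α p E ^ (q / p))
    {f : EuclideanSpace ℝ (Fin n) → ℝ} (hmem : MemLp f (ENNReal.ofReal p) volume)
    (hfin : besovSeminorm n α p f < ⊤) (hcont : Continuous f) :
    weakLorentzNorm μ q (f ∘ φ) ≤ ENNReal.ofReal (c ^ (1 / q)) * besovSeminorm n α p f := by
  refine (weakLorentzNorm_le_iff hq).2 fun t ht => ?_
  set S := besovSeminorm n α p f
  have hlevel : μ (φ ⁻¹' {y | t < |f y|}) ≤ ENNReal.ofReal c * (ENNReal.ofReal t⁻¹ * S) ^ q :=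
    calc μ (φ ⁻¹' {y | t < |f y|})
        ≤ ENNReal.ofReal c * besovCapacity n α p {y | t < |f y|} ^ (q / p) :=
          hcap _ (isOpen_lt continuous_const (by fun_prop)).measurableSet
      _ ≤ ENNReal.ofReal c * ((ENNReal.ofReal t⁻¹ * S) ^ p) ^ (q / p) := by
          gcongr
          exact besovCapacity_superlevelSet_le hp.le hmem hfin hcont ht
      _ = ENNReal.ofReal c * (ENNReal.ofReal t⁻¹ * S) ^ q := by
          rw [← ENNReal.rpow_mul, mul_div_cancel₀ _ hp.ne']
  calc ENNReal.ofReal t ^ q * μ (φ ⁻¹' {y | t < |f y|})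
      ≤ ENNReal.ofReal t ^ q * (ENNReal.ofReal c * (ENNReal.ofReal t⁻¹ * S) ^ q) := by gcongr
    _ = ENNReal.ofReal c * ((ENNReal.ofReal t * ENNReal.ofReal t⁻¹) * S) ^ q := by
      rw [ENNReal.mul_rpow_of_nonneg _ _ hq.le, ENNReal.mul_rpow_of_nonneg _ _ hq.le,
        ENNReal.mul_rpow_of_nonneg _ _ hq.le]
      ring
    _ = (ENNReal.ofReal (c ^ (1 / q)) * S) ^ q := by
      rw [← ENNReal.ofReal_mul ht.le, mul_inv_cancel₀ ht.ne', ENNReal.ofReal_one, one_mul,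
        ENNReal.mul_rpow_of_nonneg _ _ hq.le, ENNReal.ofReal_rpow_of_nonneg (by positivity) hq.le,
        ← Real.rpow_mul hc, one_div_mul_cancel hq.ne', Real.rpow_one]

end Trace

theorem besov_composition_trace_iff_capacity_bound_general (n : ℕ) (α p q : ℝ)
    (hp : 1 ≤ p) (hq : 1 ≤ q)
    (μ : MeasureTheory.OuterMeasure (EuclideanSpace ℝ (Fin n)))
    (φ : EuclideanSpace ℝ (Fin n) → EuclideanSpace ℝ (Fin n)) :
    (∃ c : ℝ, 0 < c ∧ ∀ f : EuclideanSpace ℝ (Fin n) → ℝ,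
        MemLp f (ENNReal.ofReal p) volume → besovSeminorm n α p f < ⊤ → Continuous f →
        (⨆ (t : ℝ) (_ : 0 < t), (ENNReal.ofReal t ^ q * μ {x | t < |f (φ x)|}) ^ (1 / q)) ≤
          ENNReal.ofReal c * besovSeminorm n α p f) ↔
    (∃ c : ℝ, 0 < c ∧ ∀ E : Set (EuclideanSpace ℝ (Fin n)), MeasurableSet E →
        μ (φ ⁻¹' E) ≤ ENNReal.ofReal c * besovCapacity n α p E ^ (q / p)) := by
  have hp₀ : 0 < p := by linarith
  have hq₀ : 0 < q := by linarith
  constructor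
  · rintro ⟨c, hc, htrace⟩
    exact ⟨(2 * c) ^ q, by positivity, fun E _ =>
      measure_preimage_le_of_weakLorentzNorm_comp_le hp₀ hq₀ hc htrace E⟩
  · rintro ⟨c, hc, hcap⟩
    exact ⟨c ^ (1 / q), by positivity, fun f hmem hfin hcont =>
      weakLorentzNorm_comp_le_of_measure_preimage_le hp₀ hq₀ hc.le hcap hmem hfin hcont⟩

theorem besov_composition_trace_iff_capacity_bound (n : ℕ) (α p q : ℝ)
    (hα : α ∈ Set.Ioo (0 : ℝ) 1) (hp : 1 ≤ p) (hpn : p < (n : ℝ) / α) (hq : 1 ≤ q)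
    (μ : MeasureTheory.OuterMeasure (EuclideanSpace ℝ (Fin n)))
    (φ : EuclideanSpace ℝ (Fin n) → EuclideanSpace ℝ (Fin n)) (hφ : Measurable φ) :
    (∃ c : ℝ, 0 < c ∧ ∀ f : EuclideanSpace ℝ (Fin n) → ℝ,
        MemLp f (ENNReal.ofReal p) volume → besovSeminorm n α p f < ⊤ → Continuous f →
        (⨆ (t : ℝ) (_ : 0 < t), (ENNReal.ofReal t ^ q * μ {x | t < |f (φ x)|}) ^ (1 / q)) ≤
          ENNReal.ofReal c * besovSeminorm n α p f) ↔
    (∃ c : ℝ, 0 < c ∧ ∀ E : Set (EuclideanSpace ℝ (Fin n)), MeasurableSet E →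
        μ (φ ⁻¹' E) ≤ ENNReal.ofReal c * besovCapacity n α p E ^ (q / p)) :=
  besov_composition_trace_iff_capacity_bound_general n α p q hp hq μ φ
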